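/- Suppose a group G acts faithfully and uniformly equicontinuously on a metrizable uniform space X. The following are equivalent: (1) the action has small scale bounded orbits and the orbit map p : X → X/G (with X/G carrying the uniform structure generated by p) has complete fibers; (2) there exist a Mittag-Leffler inverse sequence of groups {G_i, ψ_{i+1}} with lim¹ G_i trivial, an inverse sequence of uniform spaces {X_i, φ_{i+1}}, and compatible actions of G_i on X_i that are uniformly properly discontinuous and neutral, together with a group isomorphism G ≅ lim G_i and a uniform equivalence X ≅ lim X_i under which the action of G on X corresponds to the coordinatewise action of lim G_i on lim X_i. -/

import Mathlib

open Filter Set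

universe u v

section Actions

variable (G : Type*) (X : Type*)

/-- The action of `G` on the uniform space `X` is neutral. -/
def IsNeutralAction [SMul G X] [UniformSpace X] : Prop :=
  ∀ E ∈ uniformity X, ∃ F ∈ uniformity X,
    ∀ (x y : X) (g : G), (x, g • y) ∈ F → ∃ h : G, (h • x, y) ∈ E

/-- `G_E`: the subgroup of `G` generated by the elements that move some point
of `X` within the entourage `E`. -/
def subgroupEnt [Group G] [MulAction G X] (E : Set (X × X)) : Subgroup G :=
  Subgroup.closure { g : G | ∃ x : X, (x, g • x) ∈ E }

/-- The action has small scale bounded orbits. -/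
def SmallScaleBoundedOrbits [Group G] [MulAction G X] [UniformSpace X] : Prop :=
  ∀ E ∈ uniformity X, ∃ F ∈ uniformity X,
    ∀ g ∈ subgroupEnt G X F, ∀ x : X, (x, g • x) ∈ E

/-- The action is uniformly properly discontinuous. -/
def UnifProperlyDisc [Group G] [SMul G X] [UniformSpace X] : Prop :=
  ∃ E₀ ∈ uniformity X, ∀ (g : G) (x : X), (x, g • x) ∈ E₀ → g = 1

/-- The action is faithful. -/
def FaithfulAction [Group G] [SMul G X] : Prop :=
  ∀ g : G, (∀ x : X, g • x = x) → g = 1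

/-- The action is uniformly equicontinuous. -/
def UnifEquicont [SMul G X] [UniformSpace X] : Prop :=
  ∀ E ∈ uniformity X, ∃ F ∈ uniformity X,
    ∀ (g : G) (x y : X), (x, y) ∈ F → (g • x, g • y) ∈ E

/-- The entourage `E` is `G`-invariant. -/
def InvariantEnt [SMul G X] (E : Set (X × X)) : Prop :=
  ∀ (g : G) (x y : X), (x, y) ∈ E → (g • x, g • y) ∈ E

end Actions

section Seq

variable {A : ℕ → Sort*}

/-- Composite of the bonding maps of an inverse sequence. -/
def seqComp (φ : ∀ i, A (i + 1) → A i) (n : ℕ) : ∀ k, A (n + k) → A n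
  | 0 => id
  | k + 1 => fun a => seqComp φ n k (φ (n + k) a)

/-- Composite bonding map `A m → A n` for `n ≤ m`. -/
def seqCompLE (φ : ∀ i, A (i + 1) → A i) {n m : ℕ} (h : n ≤ m) (a : A m) : A n :=
  seqComp φ n (m - n) (cast (congrArg A (Nat.add_sub_cancel' h).symm) a)

end Seq

/-- The inverse limit of an inverse sequence (it carries the inverse limit
uniformity when the terms are uniform spaces). -/
abbrev seqLim {A : ℕ → Type*} (φ : ∀ i, A (i + 1) → A i) : Type _ :=
  { x : ∀ i, A i // ∀ i, φ i (x (i + 1)) = x i }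

/-- The Mittag-Leffler condition for an inverse sequence:
the decreasing images in each term are eventually constant. -/
def SeqMittagLeffler {A : ℕ → Type*} (φ : ∀ i, A (i + 1) → A i) : Prop :=
  ∀ n : ℕ, ∃ m : ℕ, ∃ hnm : n ≤ m, ∀ k (hk : m ≤ k),
    Set.range (seqCompLE φ (hnm.trans hk)) = Set.range (seqCompLE φ hnm)

/-- `lim¹` of an inverse sequence of groups is trivial: the difference map
`(h_i) ↦ (h_i · ψ_i(h_{i+1})⁻¹)` on the product is surjective. -/
def Lim1Trivial {Gs : ℕ → Type*} [∀ i, Group (Gs i)]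
    (ψ : ∀ i, Gs (i + 1) →* Gs i) : Prop :=
  Function.Surjective (fun h : ∀ i, Gs i => fun i => h i * (ψ i (h (i + 1)))⁻¹)

/-- The inverse limit of an inverse sequence of groups,
as the subgroup of threads of the product group. -/
def seqLimG {Gs : ℕ → Type*} [∀ i, Group (Gs i)] (ψ : ∀ i, Gs (i + 1) →* Gs i) :
    Subgroup (∀ i, Gs i) where
  carrier := { g | ∀ i, ψ i (g (i + 1)) = g i }
  one_mem' := by intro i; simp
  mul_mem' := by intro a b ha hb i; simp only [Pi.mul_apply, map_mul, ha i, hb i]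
  inv_mem' := by intro a ha i; simp only [Pi.inv_apply, map_inv, ha i]

/-- The data expressing the action of `G` on `X` as the inverse limit of
uniformly properly discontinuous and neutral compatible actions along a
Mittag-Leffler inverse sequence of groups with trivial `lim¹`. -/
structure ActionSeqData (G : Type u) [Group G] (X : Type v) [UniformSpace X]
    [MulAction G X] : Type (max u v + 1) where
  Gs : ℕ → Type u
  [instG : ∀ i, Group (Gs i)]
  ψ : ∀ i, Gs (i + 1) →* Gs i
  Xs : ℕ → Type v
  [instX : ∀ i, UniformSpace (Xs i)]
  φ : ∀ i, Xs (i + 1) → Xs i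
  φuc : ∀ i, UniformContinuous (φ i)
  [instA : ∀ i, MulAction (Gs i) (Xs i)]
  compat : ∀ i (g : Gs (i + 1)) (x : Xs (i + 1)), φ i (g • x) = ψ i g • φ i x
  ml : SeqMittagLeffler (fun i => ⇑(ψ i))
  lim1 : Lim1Trivial ψ
  upd : ∀ i, UnifProperlyDisc (Gs i) (Xs i)
  neutral : ∀ i, IsNeutralAction (Gs i) (Xs i)
  eG : G ≃* ↥(seqLimG ψ)
  eX : X ≃ᵤ seqLim φ
  equivariant : ∀ (g : G) (x : X) (i : ℕ),
    (eX (g • x)).1 i = ((eG g : ∀ j, Gs j) i) • (eX x).1 i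

/-!
Forward direction: small scale bounded orbits and equicontinuity give a basis of closed symmetric
invariant entourages `D n` with `D (n + 1) ○ D (n + 1) ⊆ D n` such that the subgroup
`G_{D (n + 1)}` moves points only `D n`-little. The normal subgroups `N n = G_{D n}` give inverse sequences
`G ⧸ N n` and `X / N n` with surjective bonding maps (hence Mittag-Leffler with trivial `lim¹`);
the induced actions are equicontinuous, hence neutral, and properly discontinuous with respect to
the image of `D n`. A thread of cosets `a n N n` turns into a Cauchy sequence `a (n + 2) • x` in
an orbit; its limit, which exists because orbits are complete, is `g • x` for some `g` lying in
every coset. This gives surjectivity of `G → lim G ⧸ N n` and then of `X → lim X / N n`;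
faithfulness and separation give injectivity, and `D n` is controlled by the image of `D (n + 2)`
in `X / N (n + 2)`, which makes `X → lim X / N n` a uniform embedding.

Converse: an element moving some point within the preimage of a properly discontinuous entourage
of `X_n` acts trivially on `X_n`, which yields small scale bounded orbits. Along a Cauchy filter
on an orbit, each coordinate in `X_n` is eventually constant, equal to `u n • x_n`; freeness of
the actions on the `X_n` makes `(u n)` a thread, i.e. an element of `G`, and the filter converges
to its image of `x`.
-/

open MulAction Topology Uniformity
open scoped SetRel

section Equicontinuous

variable {G X : Type*} [Group G] [MulAction G X] [UniformSpace X]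

theorem UnifEquicont.subgroup (hue : UnifEquicont G X) (N : Subgroup G) : UnifEquicont N X := by
  intro E hE
  obtain ⟨F, hF, hFE⟩ := hue E hE
  exact ⟨F, hF, fun g => hFE g⟩

theorem UnifEquicont.uniformContinuous_const_smul (hue : UnifEquicont G X) (g : G) :
    UniformContinuous (g • · : X → X) := by
  intro E hE
  obtain ⟨F, hF, hFE⟩ := hue E hE
  exact mem_map.2 <| mem_of_superset hF fun p hp => hFE g p.1 p.2 hp

theorem UnifEquicont.isNeutralAction (hue : UnifEquicont G X) : IsNeutralAction G X := by
  intro E hE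
  obtain ⟨F, hF, hFE⟩ := hue E hE
  exact ⟨F, hF, fun x y g hxy => ⟨g⁻¹, by simpa using hFE g⁻¹ _ _ hxy⟩⟩

theorem UnifEquicont.exists_invariant_isClosed_isSymm_subset (hue : UnifEquicont G X)
    {E : Set (X × X)} (hE : E ∈ 𝓤 X) :
    ∃ D ∈ 𝓤 X, InvariantEnt G X D ∧ IsClosed D ∧ SetRel.IsSymm D ∧ D ⊆ E := by
  obtain ⟨C, hC, hCclosed, hCE⟩ := mem_uniformity_isClosed hE
  set core : Set (X × X) := ⋂ g : G, Prod.map (g • ·) (g • ·) ⁻¹' C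
  have hcore : core ∈ 𝓤 X := by
    obtain ⟨F, hF, hFC⟩ := hue C hC
    exact mem_of_superset hF fun p hp => mem_iInter.2 fun g => hFC g p.1 p.2 hp
  have hinv : InvariantEnt G X core := fun g x y hxy => mem_iInter.2 fun g' => by
    simpa [mul_smul] using mem_iInter.1 hxy (g' * g)
  have hclosed : IsClosed core := isClosed_iInter fun g => hCclosed.preimage <|
    (hue.uniformContinuous_const_smul g).continuous.prodMap
      (hue.uniformContinuous_const_smul g).continuous
  refine ⟨SetRel.symmetrize core, symmetrize_mem_uniformity hcore,
    fun g x y hxy => ⟨hinv g x y hxy.1, hinv g y x hxy.2⟩,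
    hclosed.inter (hclosed.preimage continuous_swap), inferInstance, fun p hp => hCE ?_⟩
  simpa using mem_iInter.1 hp.1 1

end Equicontinuous

section SubgroupEnt

variable {G X : Type*} [Group G] [MulAction G X]

theorem subgroupEnt_mono {D E : Set (X × X)} (h : D ⊆ E) :
    subgroupEnt G X D ≤ subgroupEnt G X E :=
  Subgroup.closure_mono fun _ ⟨x, hx⟩ => ⟨x, h hx⟩

theorem mem_subgroupEnt {D : Set (X × X)} {g : G} {x : X} (h : (x, g • x) ∈ D) :
    g ∈ subgroupEnt G X D :=
  Subgroup.subset_closure ⟨x, h⟩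

theorem InvariantEnt.subgroupEnt_normal {D : Set (X × X)} (hD : InvariantEnt G X D) :
    (subgroupEnt G X D).Normal := by
  refine ⟨fun n hn g => ?_⟩
  have hconj : (subgroupEnt G X D).map (MulAut.conj g).toMonoidHom ≤ subgroupEnt G X D := by
    rw [subgroupEnt, MonoidHom.map_closure, Subgroup.closure_le]
    rintro _ ⟨k, ⟨x, hx⟩, rfl⟩
    exact mem_subgroupEnt (x := g • x) (by simpa [mul_smul] using hD g x (k • x) hx)
  exact hconj ⟨n, hn, rfl⟩

end SubgroupEnt

section OrbitSpace

variable {G X : Type*} [Group G] [MulAction G X] [UniformSpace X]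

/-- The orbit map generates a uniformity on `X / G` because the invariant entourages form a
basis of `𝓤 X`. -/
abbrev UnifEquicont.orbitUniformSpace (hue : UnifEquicont G X) :
    UniformSpace (orbitRel.Quotient G X) :=
  .ofCore <| .mk' (map (Prod.map (Quotient.mk _) (Quotient.mk _)) (𝓤 X))
    (fun _ hr x => Quotient.inductionOn' x fun x => by
      exact refl_mem_uniformity (x := x) (mem_map.1 hr))
    (fun _ hr => symm_le_uniformity (mem_map.1 hr))
    (by
      intro r hr
      obtain ⟨V, hV, hVr⟩ := comp_mem_uniformity_sets (mem_map.1 hr)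
      obtain ⟨W, hW, hWinv, -, -, hWV⟩ := hue.exists_invariant_isClosed_isSymm_subset hV
      refine ⟨_, image_mem_map hW, ?_⟩
      rintro ⟨a, c⟩ ⟨b, ⟨⟨x, y⟩, hxy, hx⟩, ⟨⟨y', z⟩, hyz, hz⟩⟩
      simp only [Prod.map, Prod.mk.injEq] at hx hz
      obtain ⟨g, rfl⟩ : ∃ g : G, g • y' = y := Quotient.exact (hx.2.trans hz.1.symm)
      have hxz : (g⁻¹ • x, z) ∈ V ○ V :=
        ⟨y', hWV (by simpa using hWinv g⁻¹ _ _ hxy), hWV hyz⟩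
      rw [← hx.1, ← hz.2, ← orbitRel.Quotient.quotient_smul_eq (g := g⁻¹)]
      exact hVr hxz)

end OrbitSpace

section QuotientAction

variable {G X : Type*} [Group G] [MulAction G X] (N : Subgroup G) [N.Normal]

instance : MulAction G (orbitRel.Quotient N X) where
  smul g := Quotient.map' (g • ·) fun x y ⟨n, hn⟩ =>
    ⟨⟨g * n * g⁻¹, Subgroup.Normal.conj_mem ‹_› _ n.2 g⟩, by
      simp [← hn, Subgroup.smul_def, mul_smul]⟩
  one_smul x := Quotient.inductionOn' x fun x => congrArg Quotient.mk'' (one_smul G x)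
  mul_smul g h x := Quotient.inductionOn' x fun x => congrArg Quotient.mk'' (mul_smul g h x)

instance : MulAction (G ⧸ N) (orbitRel.Quotient N X) :=
  .ofEndHom <| QuotientGroup.lift N (MulAction.toEndHom) fun n hn => by
    funext x
    induction x using Quotient.inductionOn' with
    | h x => exact Quotient.sound ⟨⟨n, hn⟩, rfl⟩

end QuotientAction

section QuotientUniformity

variable {G X : Type*} [Group G] [MulAction G X] [UniformSpace X]

variable (G X) in
def IsOrbitUniformity (u : UniformSpace (orbitRel.Quotient G X)) : Prop :=
  𝓤[u] = map (Prod.map (Quotient.mk _) (Quotient.mk _)) (𝓤 X)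

theorem UnifEquicont.isOrbitUniformity (hue : UnifEquicont G X) :
    IsOrbitUniformity G X hue.orbitUniformSpace :=
  rfl

theorem IsOrbitUniformity.image_mem {u : UniformSpace (orbitRel.Quotient G X)}
    (hG : IsOrbitUniformity G X u) {E : Set (X × X)} (hE : E ∈ 𝓤 X) :
    Prod.map (Quotient.mk _) (Quotient.mk _) '' E ∈ 𝓤[u] :=
  hG ▸ image_mem_map hE

theorem IsOrbitUniformity.uniformContinuous_mk {u : UniformSpace (orbitRel.Quotient G X)}
    (hG : IsOrbitUniformity G X u) :
    UniformContinuous (Quotient.mk _ : X → orbitRel.Quotient G X) := by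
  rw [UniformContinuous, hG]
  exact tendsto_map

variable {N : Subgroup G} [N.Normal] [u : UniformSpace (orbitRel.Quotient N X)]

theorem IsOrbitUniformity.unifEquicont (hN : IsOrbitUniformity N X u) (hue : UnifEquicont G X) :
    UnifEquicont (G ⧸ N) (orbitRel.Quotient N X) := by
  intro S hS
  rw [hN] at hS
  obtain ⟨F, hF, hFS⟩ := hue _ hS
  refine ⟨_, hN.image_mem hF, fun q _ _ => ?_⟩
  rintro ⟨⟨x, y⟩, hxy, hmk⟩
  simp only [Prod.map, Prod.mk.injEq] at hmk
  obtain ⟨rfl, rfl⟩ := hmk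
  induction q using QuotientGroup.induction_on with
  | H g => exact hFS g x y hxy

theorem IsOrbitUniformity.unifProperlyDisc (hN : IsOrbitUniformity N X u) {D : Set (X × X)}
    (hD : D ∈ 𝓤 X) (hDinv : InvariantEnt G X D) (hDN : subgroupEnt G X D ≤ N) :
    UnifProperlyDisc (G ⧸ N) (orbitRel.Quotient N X) := by
  refine ⟨_, hN.image_mem hD, fun q ξ => ?_⟩
  induction q using QuotientGroup.induction_on with | H g => ?_
  induction ξ using Quotient.inductionOn' with | h x => ?_
  rintro ⟨⟨y, z⟩, hyz, hmk⟩
  simp only [Prod.map, Prod.mk.injEq] at hmk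
  obtain ⟨m, rfl⟩ : ∃ m : N, (m : G) • x = y := Quotient.exact hmk.1
  obtain ⟨k, rfl⟩ : ∃ k : N, (k : G) • g • x = z := Quotient.exact hmk.2
  have hmove : (x, ((m : G)⁻¹ * k * g) • x) ∈ D := by
    simpa [mul_smul] using hDinv (m : G)⁻¹ _ _ hyz
  have hg : (k : G) * g ∈ N := by
    simpa [mul_assoc] using N.mul_mem m.2 (hDN (mem_subgroupEnt hmove))
  exact (QuotientGroup.eq_one_iff g).2 ((N.mul_mem_cancel_left k.2).1 hg)

end QuotientUniformity

section QuotientMap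

variable {G X : Type*} [Group G] [MulAction G X] {N M : Subgroup G}

def orbitRel.Quotient.mapOfLE (h : N ≤ M) : orbitRel.Quotient N X → orbitRel.Quotient M X :=
  Quotient.map' id fun _ _ ⟨n, hn⟩ => ⟨⟨n, h n.2⟩, hn⟩

theorem orbitRel.Quotient.mapOfLE_smul [N.Normal] [M.Normal] (h : N ≤ M) (q : G ⧸ N)
    (ξ : orbitRel.Quotient N X) :
    mapOfLE h (q • ξ) = QuotientGroup.map N M (MonoidHom.id G) h q • mapOfLE h ξ := by
  induction q using QuotientGroup.induction_on with | H g => ?_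
  induction ξ using Quotient.inductionOn' with | h x => rfl

theorem IsOrbitUniformity.uniformContinuous_mapOfLE [UniformSpace X]
    {uN : UniformSpace (orbitRel.Quotient N X)} {uM : UniformSpace (orbitRel.Quotient M X)}
    (hN : IsOrbitUniformity N X uN) (hM : IsOrbitUniformity M X uM) (h : N ≤ M) :
    UniformContinuous (orbitRel.Quotient.mapOfLE (X := X) h) := by
  rw [UniformContinuous, hN, hM, tendsto_map'_iff]
  exact tendsto_map

end QuotientMap

section InverseSequence

variable {A : ℕ → Type*} {φ : ∀ i, A (i + 1) → A i}

theorem seqComp_surjective (hφ : ∀ i, Function.Surjective (φ i)) (n : ℕ) :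
    ∀ k, Function.Surjective (seqComp φ n k)
  | 0 => Function.surjective_id
  | k + 1 => (seqComp_surjective hφ n k).comp (hφ (n + k))

theorem seqCompLE_surjective (hφ : ∀ i, Function.Surjective (φ i)) {n m : ℕ} (h : n ≤ m) :
    Function.Surjective (seqCompLE φ h) :=
  (seqComp_surjective hφ n (m - n)).comp (cast_bijective _).surjective

theorem seqMittagLeffler_of_surjective (hφ : ∀ i, Function.Surjective (φ i)) :
    SeqMittagLeffler φ := fun n => ⟨n, le_rfl, fun _ _ => by
  rw [(seqCompLE_surjective hφ _).range_eq, (seqCompLE_surjective hφ _).range_eq]⟩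

theorem lim1Trivial_of_surjective {Gs : ℕ → Type*} [∀ i, Group (Gs i)]
    {ψ : ∀ i, Gs (i + 1) →* Gs i} (hψ : ∀ i, Function.Surjective (ψ i)) :
    Lim1Trivial ψ := by
  intro t
  choose s hs using hψ
  let h : ∀ n, Gs n := fun n => Nat.rec (motive := Gs) 1 (fun n hn => s n ((t n)⁻¹ * hn)) n
  refine ⟨h, funext fun n => ?_⟩
  change h n * (ψ n (s n ((t n)⁻¹ * h n)))⁻¹ = t n
  rw [hs]
  group

theorem seqLim.uniformContinuous_eval [∀ i, UniformSpace (A i)] (n : ℕ) :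
    UniformContinuous fun ξ : seqLim φ => ξ.1 n :=
  (Pi.uniformContinuous_proj _ n).comp uniformContinuous_subtype_val

theorem seqLim.exists_coord_entourage_subset [∀ i, UniformSpace (A i)]
    (hφ : ∀ i, UniformContinuous (φ i)) {T : Set (seqLim φ × seqLim φ)}
    (hT : T ∈ 𝓤 (seqLim φ)) :
    ∃ n, ∃ S ∈ 𝓤 (A n), {p : seqLim φ × seqLim φ | (p.1.1 n, p.2.1 n) ∈ S} ⊆ T := by
  let coord n (p : seqLim φ × seqLim φ) : A n × A n := (p.1.1 n, p.2.1 n)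
  have huniformity : 𝓤 (seqLim φ) = ⨅ n, comap (coord n) (𝓤 (A n)) := by
    simp only [uniformity_subtype, Pi.uniformity, comap_iInf, comap_comap]
    rfl
  have hanti : Antitone fun n => comap (coord n) (𝓤 (A n)) := by
    refine antitone_nat_of_succ_le fun n => ?_
    have hcoord : coord n = Prod.map (φ n) (φ n) ∘ coord (n + 1) := by
      funext p
      simp only [coord, Function.comp, Prod.map, p.1.2 n, p.2.2 n]
    rw [hcoord, ← comap_comap]
    exact comap_mono (tendsto_iff_comap.1 (hφ n))
  rw [huniformity] at hT
  obtain ⟨n, hn⟩ := (mem_iInf_of_directed hanti.directed_ge T).1 hT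
  obtain ⟨S, hS, hST⟩ := mem_comap.1 hn
  exact ⟨n, S, hS, hST⟩

end InverseSequence

theorem UnifProperlyDisc.eq_of_smul_eq_smul {H Y : Type*} [Group H] [MulAction H Y]
    [UniformSpace Y] (hH : UnifProperlyDisc H Y) {a b : H} {y : Y} (hab : a • y = b • y) :
    a = b := by
  obtain ⟨E₀, hE₀, hE₀one⟩ := hH
  refine (inv_mul_eq_one.1 (hE₀one _ y ?_)).symm
  rw [mul_smul, hab, inv_smul_smul]
  exact refl_mem_uniformity hE₀

namespace ActionSeqData

variable {G X : Type*} [Group G] [UniformSpace X] [MulAction G X]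

attribute [local instance] instG instX instA

def groupCoord (d : ActionSeqData G X) (n : ℕ) : G →* d.Gs n :=
  (Pi.evalMonoidHom d.Gs n).comp ((seqLimG d.ψ).subtype.comp d.eG.toMonoidHom)

def coord (d : ActionSeqData G X) (n : ℕ) (x : X) : d.Xs n :=
  (d.eX x).1 n

theorem coord_smul (d : ActionSeqData G X) (n : ℕ) (g : G) (x : X) :
    d.coord n (g • x) = d.groupCoord n g • d.coord n x :=
  d.equivariant g x n

theorem φ_coord_succ (d : ActionSeqData G X) (n : ℕ) (x : X) :
    d.φ n (d.coord (n + 1) x) = d.coord n x :=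
  (d.eX x).2 n

theorem uniformContinuous_coord (d : ActionSeqData G X) (n : ℕ) : UniformContinuous (d.coord n) :=
  (seqLim.uniformContinuous_eval n).comp d.eX.uniformContinuous

theorem exists_forall_coord_eq_mem (d : ActionSeqData G X) {E : Set (X × X)} (hE : E ∈ 𝓤 X) :
    ∃ n, ∀ x y, d.coord n x = d.coord n y → (x, y) ∈ E := by
  obtain ⟨n, S, hS, hST⟩ := seqLim.exists_coord_entourage_subset d.φuc
    (d.eX.symm.uniformContinuous hE)
  refine ⟨n, fun x y hxy => ?_⟩
  have hS' : (d.coord n x, d.coord n y) ∈ S := hxy ▸ refl_mem_uniformity hS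
  simpa using hST (a := (d.eX x, d.eX y)) hS'

theorem smallScaleBoundedOrbits (d : ActionSeqData G X) : SmallScaleBoundedOrbits G X := by
  intro E hE
  obtain ⟨n, hn⟩ := d.exists_forall_coord_eq_mem hE
  obtain ⟨E₀, hE₀, hE₀one⟩ := d.upd n
  refine ⟨_, d.uniformContinuous_coord n hE₀, fun g hg x => hn _ _ ?_⟩
  have hker :
      subgroupEnt G X (Prod.map (d.coord n) (d.coord n) ⁻¹' E₀) ≤ (d.groupCoord n).ker := by
    refine (Subgroup.closure_le _).2 fun k ⟨y, hy⟩ => hE₀one _ (d.coord n y) ?_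
    simpa [coord_smul] using hy
  rw [coord_smul, (d.groupCoord n).mem_ker.1 (hker hg), one_smul]

theorem le_nhds_of_forall_eventually_coord_eq (d : ActionSeqData G X) {f : Filter X} {y : X}
    (hf : ∀ n, ∀ᶠ w in f, d.coord n w = d.coord n y) : f ≤ 𝓝 y := by
  refine (nhds_basis_uniformity (𝓤 X).basis_sets).ge_iff.2 fun E hE => ?_
  obtain ⟨n, hn⟩ := d.exists_forall_coord_eq_mem hE
  exact (hf n).mono fun w hw => hn w y hw

theorem exists_eventually_coord_eq (d : ActionSeqData G X) {f : Filter X} {x : X} (hf : Cauchy f)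
    (hfx : f ≤ 𝓟 (orbit G x)) (n : ℕ) :
    ∃ g : G, ∀ᶠ w in f, d.coord n w = d.groupCoord n g • d.coord n x := by
  obtain ⟨E₀, hE₀, hE₀one⟩ := d.upd n
  obtain ⟨A, hAf, hAE₀⟩ := (cauchy_iff.1 hf).2 _ (d.uniformContinuous_coord n hE₀)
  have hAx : A ∩ orbit G x ∈ f := inter_mem hAf (le_principal_iff.1 hfx)
  obtain ⟨-, hw₀, g₀, rfl⟩ := hf.1.nonempty_of_mem hAx
  refine ⟨g₀, mem_of_superset hAx ?_⟩
  rintro _ ⟨hw, g, rfl⟩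
  have hclose := hAE₀ (mk_mem_prod hw₀ hw)
  simp only [mem_preimage, coord_smul] at hclose
  -- two `E₀`-close points of one orbit of a properly discontinuous action coincide
  have hone : d.groupCoord n g * (d.groupCoord n g₀)⁻¹ = 1 :=
    hE₀one _ _ (by rwa [mul_smul, inv_smul_smul])
  change d.coord n (g • x) = _
  rw [coord_smul, mul_inv_eq_one.1 hone]

theorem isComplete_orbit (d : ActionSeqData G X) (x : X) : IsComplete (orbit G x) := by
  intro f hf hfx
  choose g hg using d.exists_eventually_coord_eq hf hfx
  have hthread : ∀ n, d.ψ n (d.groupCoord (n + 1) (g (n + 1))) = d.groupCoord n (g n) := by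
    intro n
    have := hf.1
    obtain ⟨w, hw, hw'⟩ := ((hg n).and (hg (n + 1))).exists
    refine (d.upd n).eq_of_smul_eq_smul (y := d.coord n x) ?_
    calc d.ψ n (d.groupCoord (n + 1) (g (n + 1))) • d.coord n x
        = d.φ n (d.coord (n + 1) w) := by rw [hw', d.compat, φ_coord_succ]
      _ = d.groupCoord n (g n) • d.coord n x := by rw [φ_coord_succ, hw]
  let u : seqLimG d.ψ := ⟨fun n => d.groupCoord n (g n), hthread⟩
  refine ⟨d.eG.symm u • x, mem_orbit _ _, d.le_nhds_of_forall_eventually_coord_eq fun n => ?_⟩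
  have hu : d.groupCoord n (d.eG.symm u) = d.groupCoord n (g n) :=
    congrFun (congrArg Subtype.val (d.eG.apply_symm_apply u)) n
  exact (hg n).mono fun w hw => by rw [hw, coord_smul, hu]

end ActionSeqData

section QuotientSequence

variable {G : Type*} [Group G] (N : ℕ → Subgroup G) (hN : Antitone N)
  (X : Type*) [MulAction G X]

def orbitBonding (n : ℕ) : orbitRel.Quotient (N (n + 1)) X → orbitRel.Quotient (N n) X :=
  orbitRel.Quotient.mapOfLE (hN n.le_succ)

def toSeqLimOrbit (x : X) :
    seqLim (A := fun n => orbitRel.Quotient (N n) X) (orbitBonding N hN X) :=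
  ⟨fun _ => ⟦x⟧, fun _ => rfl⟩

theorem uniformContinuous_toSeqLimOrbit [UniformSpace X]
    [∀ n, UniformSpace (orbitRel.Quotient (N n) X)]
    (hU : ∀ n, IsOrbitUniformity (N n) X inferInstance) :
    UniformContinuous (toSeqLimOrbit N hN X) :=
  (uniformContinuous_pi.2 fun n => (hU n).uniformContinuous_mk).subtype_mk _

variable [∀ n, (N n).Normal]

def quotientBonding (n : ℕ) : G ⧸ N (n + 1) →* G ⧸ N n :=
  QuotientGroup.map _ _ (MonoidHom.id G) (hN n.le_succ)

theorem quotientBonding_surjective (n : ℕ) : Function.Surjective (quotientBonding N hN n) :=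
  QuotientGroup.map_surjective_of_surjective _ _ _ QuotientGroup.mk_surjective _

def toSeqLimQuotient : G →* seqLimG (Gs := fun n => G ⧸ N n) (quotientBonding N hN) where
  toFun g := ⟨fun _ => g, fun _ => rfl⟩
  map_one' := rfl
  map_mul' _ _ := rfl

theorem toSeqLimQuotient_injective (h : ∀ g, (∀ n, g ∈ N n) → g = 1) :
    Function.Injective (toSeqLimQuotient N hN) := by
  refine (injective_iff_map_eq_one _).2 fun g hg => h g fun n => ?_
  exact (QuotientGroup.eq_one_iff g).1 (congrFun (congrArg Subtype.val hg) n)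

theorem toSeqLimQuotient_surjective_iff :
    Function.Surjective (toSeqLimQuotient N hN) ↔ ∀ a : ℕ → G,
      (∀ n, (a n)⁻¹ * a (n + 1) ∈ N n) → ∃ g, ∀ n, (a n)⁻¹ * g ∈ N n := by
  constructor
  · intro hG a ha
    obtain ⟨g, hg⟩ :=
      hG ⟨fun n => (a n : G ⧸ N n), fun n => (QuotientGroup.eq.2 (ha n)).symm⟩
    exact ⟨g, fun n => QuotientGroup.eq.1 (congrFun (congrArg Subtype.val hg) n).symm⟩
  · intro h u
    have hthread (n : ℕ) : ((u.1 (n + 1)).out : G ⧸ N n) = (u.1 n).out :=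
      calc ((u.1 (n + 1)).out : G ⧸ N n)
          = quotientBonding N hN n (u.1 (n + 1)).out := rfl
        _ = u.1 n := by rw [QuotientGroup.out_eq', u.2 n]
        _ = (u.1 n).out := (QuotientGroup.out_eq' _).symm
    obtain ⟨g, hg⟩ := h (fun n => (u.1 n).out) fun n => QuotientGroup.eq.1 (hthread n).symm
    exact ⟨g, Subtype.ext <| funext fun n =>
      (QuotientGroup.eq.2 (hg n)).symm.trans (QuotientGroup.out_eq' (u.1 n))⟩

theorem toSeqLimOrbit_surjective (hG : Function.Surjective (toSeqLimQuotient N hN)) :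
    Function.Surjective (toSeqLimOrbit N hN X) := by
  intro ξ
  obtain ⟨x, hx⟩ : ∃ x : ℕ → X, ∀ n, ⟦x n⟧ = ξ.1 n :=
    ⟨fun n => (ξ.1 n).out, fun n => (ξ.1 n).out_eq⟩
  have hstep (n : ℕ) : ∃ m : N n, (m : G) • x n = x (n + 1) :=
    Quotient.exact ((hx n).trans ((ξ.2 n).symm.trans (congrArg _ (hx (n + 1)).symm))).symm
  choose m hm using hstep
  let a : ℕ → G := fun n => Nat.rec 1 (fun n an => m n * an) n
  have ha (n : ℕ) : a n • x 0 = x n := by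
    induction n with
    | zero => exact one_smul G _
    | succ n ih => rw [← hm, ← ih, ← mul_smul]
  obtain ⟨g, hg⟩ := (toSeqLimQuotient_surjective_iff N hN).1 hG a fun n => by
    simpa [a, mul_assoc] using Subgroup.Normal.conj_mem inferInstance _ (m n).2 (a n)⁻¹
  refine ⟨g • x 0, Subtype.ext <| funext fun n => ?_⟩
  rw [← hx n, ← ha n]
  exact Quotient.sound ⟨⟨g * (a n)⁻¹, Subgroup.Normal.mem_comm inferInstance (hg n)⟩, by
    simp [Subgroup.smul_def, mul_smul]⟩

end QuotientSequence

section Tower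

variable {G X : Type*} [Group G] [MulAction G X] [UniformSpace X]

variable (G X) in
structure IsOrbitTower (D : ℕ → Set (X × X)) : Prop where
  basis : (𝓤 X).HasBasis (fun _ => True) D
  invariant : ∀ n, InvariantEnt G X (D n)
  isClosed : ∀ n, IsClosed (D n)
  isSymm : ∀ n, SetRel.IsSymm (D n)
  comp_subset : ∀ n, D (n + 1) ○ D (n + 1) ⊆ D n
  smul_mem : ∀ n, ∀ g ∈ subgroupEnt G X (D (n + 1)), ∀ x, (x, g • x) ∈ D n

theorem exists_isOrbitTower [(𝓤 X).IsCountablyGenerated] (hue : UnifEquicont G X)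
    (hss : SmallScaleBoundedOrbits G X) : ∃ D, IsOrbitTower G X D := by
  obtain ⟨B, hB⟩ := (𝓤 X).exists_antitone_basis
  have hstep : ∀ S ∈ 𝓤 X, ∀ n, ∃ T ∈ 𝓤 X, InvariantEnt G X T ∧ IsClosed T ∧
      SetRel.IsSymm T ∧ T ⊆ B n ∧ T ○ T ⊆ S ∧
      ∀ g ∈ subgroupEnt G X T, ∀ x, (x, g • x) ∈ S := by
    intro S hS n
    obtain ⟨F, hF, hFS⟩ := hss S hS
    obtain ⟨W, hW, hWS⟩ := comp_mem_uniformity_sets hS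
    obtain ⟨T, hT, hTinv, hTclosed, hTsymm, hTsub⟩ :=
      hue.exists_invariant_isClosed_isSymm_subset (inter_mem (inter_mem (hB.mem n) hF) hW)
    refine ⟨T, hT, hTinv, hTclosed, hTsymm, fun p hp => (hTsub hp).1.1,
      (SetRel.comp_subset_comp (fun p hp => (hTsub hp).2) fun p hp => (hTsub hp).2).trans hWS,
      fun g hg => hFS g (subgroupEnt_mono (fun p hp => (hTsub hp).1.2) hg)⟩
  choose! next hmem hinv hclosed hsymm hB' hcomp hsmul using hstep
  -- `E 0 = univ`, and `D n = E (n + 1)` refines `E n` inside `B n`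
  let E : ℕ → Set (X × X) := fun n => Nat.rec univ (fun n S => next S n) n
  have hE (n : ℕ) : E n ∈ 𝓤 X := by
    induction n with
    | zero => exact univ_mem
    | succ n ih => exact hmem _ ih n
  refine ⟨fun n => E (n + 1), ⟨?_, fun n => hinv _ (hE n) n, fun n => hclosed _ (hE n) n,
    fun n => hsymm _ (hE n) n, fun n => hcomp _ (hE (n + 1)) (n + 1),
    fun n => hsmul _ (hE (n + 1)) (n + 1)⟩⟩
  exact hB.toHasBasis.to_hasBasis (fun n _ => ⟨n, trivial, hB' _ (hE n) n⟩)
    fun n _ => hB.toHasBasis.mem_iff.1 (hE (n + 1))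

namespace IsOrbitTower

variable {D : ℕ → Set (X × X)}

theorem mem_uniformity (hD : IsOrbitTower G X D) (n : ℕ) : D n ∈ 𝓤 X :=
  hD.basis.mem_of_mem trivial

theorem antitone (hD : IsOrbitTower G X D) : Antitone D :=
  antitone_nat_of_succ_le fun n ⟨_, y⟩ hxy =>
    hD.comp_subset n ⟨y, hxy, refl_mem_uniformity (hD.mem_uniformity _)⟩

theorem subgroupEnt_antitone (hD : IsOrbitTower G X D) :
    Antitone fun n => subgroupEnt G X (D n) :=
  fun _ _ h => subgroupEnt_mono (hD.antitone h)

theorem exists_forall_mem_of_isComplete (hD : IsOrbitTower G X D) {s : Set X}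
    (hs : IsComplete s) {z : ℕ → X} (hzs : ∀ n, z n ∈ s)
    (hz : ∀ n, (z n, z (n + 1)) ∈ D (n + 1)) : ∃ y ∈ s, ∀ n, (z n, y) ∈ D n := by
  have hchain (k : ℕ) : ∀ n, (z n, z (n + k)) ∈ D n := by
    induction k with
    | zero => exact fun n => refl_mem_uniformity (hD.mem_uniformity n)
    | succ k ih =>
      refine fun n => hD.comp_subset n ⟨z (n + 1), hz n, ?_⟩
      have h := ih (n + 1)
      rwa [Nat.add_right_comm] at h
  have hcauchy : CauchySeq z := hD.basis.cauchySeq_iff.2 fun n _ => ⟨n + 1, fun m hm l hl => by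
    obtain ⟨i, rfl⟩ := Nat.exists_eq_add_of_le hm
    obtain ⟨j, rfl⟩ := Nat.exists_eq_add_of_le hl
    exact hD.comp_subset n ⟨_, (hD.isSymm _).symm _ _ (hchain i (n + 1)), hchain j (n + 1)⟩⟩
  obtain ⟨y, hys, hy⟩ := hs _ hcauchy (le_principal_iff.2 (mem_map.2 (univ_mem' hzs)))
  refine ⟨y, hys, fun n =>
    (hD.isClosed n).mem_of_tendsto (tendsto_const_nhds.prodMk_nhds hy) ?_⟩
  refine eventually_atTop.2 ⟨n, fun m hm => ?_⟩
  obtain ⟨k, rfl⟩ := Nat.exists_eq_add_of_le hm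
  exact hchain k n

theorem exists_forall_inv_mul_mem (hD : IsOrbitTower G X D) (hfaith : FaithfulAction G X)
    (hcomp : ∀ x : X, IsComplete (orbit G x)) (a : ℕ → G)
    (ha : ∀ n, (a n)⁻¹ * a (n + 1) ∈ subgroupEnt G X (D n)) :
    ∃ g, ∀ n, (a n)⁻¹ * g ∈ subgroupEnt G X (D n) := by
  rcases isEmpty_or_nonempty X with hX | ⟨⟨x₀⟩⟩
  · refine ⟨1, fun n => ?_⟩
    rw [hfaith ((a n)⁻¹ * 1) fun x => isEmptyElim x]
    exact one_mem _
  have hmove (n : ℕ) : (a (n + 2) • x₀, a (n + 3) • x₀) ∈ D (n + 1) := by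
    simpa [mul_smul] using
      hD.invariant (n + 1) (a (n + 2)) _ _ (hD.smul_mem (n + 1) _ (ha (n + 2)) x₀)
  obtain ⟨-, ⟨g, rfl⟩, hg⟩ :=
    hD.exists_forall_mem_of_isComplete (hcomp x₀) (fun n => mem_orbit x₀ (a (n + 2))) hmove
  refine ⟨g, fun n => ?_⟩
  have h₁ : (a (n + 1))⁻¹ * a (n + 2) ∈ subgroupEnt G X (D n) :=
    hD.subgroupEnt_antitone n.le_succ (ha (n + 1))
  have h₂ : (a (n + 2))⁻¹ * g ∈ subgroupEnt G X (D n) := mem_subgroupEnt (x := x₀) <| by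
    simpa [mul_smul] using hD.invariant n (a (n + 2))⁻¹ _ _ (hg n)
  simpa [mul_assoc] using mul_mem (mul_mem (ha n) h₁) h₂

theorem eq_one_of_forall_mem [T0Space X] (hD : IsOrbitTower G X D) (hfaith : FaithfulAction G X)
    {g : G} (hg : ∀ n, g ∈ subgroupEnt G X (D n)) : g = 1 :=
  hfaith g fun x => (eq_of_uniformity_basis hD.basis fun {n} _ =>
    hD.smul_mem n g (hg (n + 1)) x).symm

theorem mem_of_mk_mem_image (hD : IsOrbitTower G X D) {n : ℕ} {x y : X}
    (h : (⟦x⟧, ⟦y⟧) ∈ Prod.map (Quotient.mk (orbitRel (subgroupEnt G X (D (n + 2))) X))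
      (Quotient.mk (orbitRel (subgroupEnt G X (D (n + 2))) X)) '' D (n + 2)) :
    (x, y) ∈ D n := by
  obtain ⟨⟨u, v⟩, huv, hmk⟩ := h
  simp only [Prod.map, Prod.mk.injEq] at hmk
  obtain ⟨m, rfl⟩ : ∃ m : subgroupEnt G X (D (n + 2)), (m : G) • x = u :=
    Quotient.exact hmk.1
  obtain ⟨k, rfl⟩ : ∃ k : subgroupEnt G X (D (n + 2)), (k : G) • y = v :=
    Quotient.exact hmk.2
  have hxy : (x, ((m : G)⁻¹ * k) • y) ∈ D (n + 1) := hD.antitone (n + 1).le_succ <| by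
    simpa [mul_smul] using hD.invariant (n + 2) (m : G)⁻¹ _ _ huv
  have hyy : (((m : G)⁻¹ * k) • y, y) ∈ D (n + 1) :=
    (hD.isSymm _).symm _ _ (hD.smul_mem (n + 1) _ (mul_mem (inv_mem m.2) k.2) y)
  exact hD.comp_subset n ⟨_, hxy, hyy⟩

theorem isUniformInducing_toSeqLimOrbit (hD : IsOrbitTower G X D)
    [∀ n, UniformSpace (orbitRel.Quotient (subgroupEnt G X (D n)) X)]
    (hU : ∀ n, IsOrbitUniformity (subgroupEnt G X (D n)) X inferInstance) :
    IsUniformInducing (toSeqLimOrbit _ hD.subgroupEnt_antitone X) := by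
  refine isUniformInducing_iff'.2 ⟨uniformContinuous_toSeqLimOrbit _ _ X hU, fun s hs => ?_⟩
  obtain ⟨n, -, hn⟩ := hD.basis.mem_iff.1 hs
  exact mem_comap.2 ⟨_, seqLim.uniformContinuous_eval (n + 2)
      ((hU (n + 2)).image_mem (hD.mem_uniformity (n + 2))),
    fun _ hxy => hn (hD.mem_of_mk_mem_image hxy)⟩

end IsOrbitTower

end Tower

theorem IsOrbitTower.nonempty_actionSeqData {G : Type u} [Group G] {X : Type v} [UniformSpace X]
    [MulAction G X] [T0Space X] {D : ℕ → Set (X × X)} (hD : IsOrbitTower G X D)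
    (hue : UnifEquicont G X) (hfaith : FaithfulAction G X)
    (hcomp : ∀ x : X, IsComplete (orbit G x)) : Nonempty (ActionSeqData G X) := by
  let N n := subgroupEnt G X (D n)
  have _ : ∀ n, (N n).Normal := fun n => (hD.invariant n).subgroupEnt_normal
  let _ : ∀ n, UniformSpace (orbitRel.Quotient (N n) X) :=
    fun n => (hue.subgroup (N n)).orbitUniformSpace
  have hU n : IsOrbitUniformity (N n) X inferInstance := (hue.subgroup (N n)).isOrbitUniformity
  have hG : Function.Bijective (toSeqLimQuotient N hD.subgroupEnt_antitone) :=
    ⟨toSeqLimQuotient_injective _ _ fun _ => hD.eq_one_of_forall_mem hfaith,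
      (toSeqLimQuotient_surjective_iff _ _).2 (hD.exists_forall_inv_mul_mem hfaith hcomp)⟩
  have hX := hD.isUniformInducing_toSeqLimOrbit hU
  exact ⟨{
    Gs n := G ⧸ N n
    ψ := quotientBonding N hD.subgroupEnt_antitone
    Xs n := orbitRel.Quotient (N n) X
    φ := orbitBonding N hD.subgroupEnt_antitone X
    φuc n := (hU (n + 1)).uniformContinuous_mapOfLE (hU n) _
    compat n := orbitRel.Quotient.mapOfLE_smul _
    ml := seqMittagLeffler_of_surjective (quotientBonding_surjective _ _)
    lim1 := lim1Trivial_of_surjective (quotientBonding_surjective _ _)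
    upd n := (hU n).unifProperlyDisc (hD.mem_uniformity n) (hD.invariant n) le_rfl
    neutral n := ((hU n).unifEquicont hue).isNeutralAction
    eG := MulEquiv.ofBijective _ hG
    eX := (Equiv.ofBijective _ ⟨hX.isUniformEmbedding.injective,
      toSeqLimOrbit_surjective _ _ X hG.2⟩).toUniformEquivOfIsUniformInducing hX
    equivariant _ _ _ := rfl }⟩

/-- Suppose `G` acts faithfully and uniformly equicontinuously on a metrizable
uniform space `X`.  Then the action has small scale bounded orbits and the
orbit map `X → X/G` has complete fibers (every orbit is complete) if and only
if the action is (equivariantly uniformly equivalent to) the inverse limit of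
uniformly properly discontinuous and neutral compatible actions along a
Mittag-Leffler inverse sequence of groups with trivial `lim¹`. -/
theorem smallScaleBoundedOrbits_completeFibers_iff_actionSeqData
    {G : Type u} [Group G] {X : Type v} [UniformSpace X] [MulAction G X]
    [T2Space X] [(uniformity X).IsCountablyGenerated]
    (hfaith : FaithfulAction G X) (hue : UnifEquicont G X) :
    (SmallScaleBoundedOrbits G X ∧
        ∀ x : X, IsComplete (MulAction.orbit G x)) ↔
      Nonempty (ActionSeqData G X) := by
  constructor
  · rintro ⟨hss, hcomp⟩
    obtain ⟨D, hD⟩ := exists_isOrbitTower hue hss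
    exact hD.nonempty_actionSeqData hue hfaith hcomp
  · rintro ⟨d⟩
    exact ⟨d.smallScaleBoundedOrbits, d.isComplete_orbit⟩
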